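/- arXiv:math/9809069 — 9 statements merged into one kernel-verified Lean document; each statement's English description precedes it below -/
import Mathlib

section
/- In the density topology on ℝ, a set is nowhere dense if and only if it is a Lebesgue nullset; in particular, the ideals of meager sets and of nullsets coincide in the density topology. -/
open MeasureTheory Set Filter Topology

/-- `x` is a Lebesgue density point of `E`. -/
def IsDensityPoint (E : Set ℝ) (x : ℝ) : Prop :=
  Tendsto (fun h : ℝ => volume (E ∩ Icc (x - h) (x + h)) / ENNReal.ofReal (2 * h))
    (nhdsWithin 0 (Ioi 0)) (nhds 1)

/-- `E` is open in the density topology. -/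
def DensityOpen (E : Set ℝ) : Prop :=
  MeasurableSet E ∧ ∀ x ∈ E, IsDensityPoint E x

/-- A nonempty density-open set has positive measure. -/
lemma DensityOpen.volume_ne_zero {U : Set ℝ} (hU : DensityOpen U) {x : ℝ}
    (hx : x ∈ U) : volume U ≠ 0 := by
  intro h0
  have hd := hU.2 x hx
  have hzero : Tendsto (fun h : ℝ => volume (U ∩ Icc (x - h) (x + h)) / ENNReal.ofReal (2 * h))
      (nhdsWithin 0 (Ioi 0)) (nhds 0) := by
    have : ∀ h : ℝ, volume (U ∩ Icc (x - h) (x + h)) / ENNReal.ofReal (2 * h) = 0 := by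
      intro h
      have : volume (U ∩ Icc (x - h) (x + h)) = 0 :=
        measure_mono_null inter_subset_left h0
      rw [this, ENNReal.zero_div]
    rw [funext this]; exact tendsto_const_nhds
  exact one_ne_zero (tendsto_nhds_unique hd hzero)

/-- The complement of a measurable null set is density-open. -/
lemma densityOpen_compl_of_null {B : Set ℝ} (hB : MeasurableSet B)
    (h0 : volume B = 0) : DensityOpen Bᶜ := by
  refine ⟨hB.compl, fun x _ => ?_⟩
  have heq : ∀ᶠ h : ℝ in nhdsWithin 0 (Ioi 0),
      volume (Bᶜ ∩ Icc (x - h) (x + h)) / ENNReal.ofReal (2 * h) = 1 := by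
    filter_upwards [self_mem_nhdsWithin] with h (hh : 0 < h)
    have h1 : volume (Bᶜ ∩ Icc (x - h) (x + h)) = volume (Icc (x - h) (x + h)) := by
      rw [inter_comm, ← diff_eq]
      exact measure_diff_null h0
    have h2 : volume (Icc (x - h) (x + h)) = ENNReal.ofReal (2 * h) := by
      rw [Real.volume_Icc]; ring_nf
    rw [h1, h2]
    exact ENNReal.div_self (by simp [ENNReal.ofReal_eq_zero]; linarith) ENNReal.ofReal_ne_top
  unfold IsDensityPoint
  rw [tendsto_congr' heq]
  exact tendsto_const_nhds

/-- Any measurable set of positive measure contains a nonempty density-open set. -/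
lemma exists_densityOpen_subset {C : Set ℝ} (hC : MeasurableSet C)
    (h0 : volume C ≠ 0) : ∃ U : Set ℝ, DensityOpen U ∧ U ⊆ C ∧ U.Nonempty := by
  have hae := Besicovitch.ae_tendsto_measure_inter_div (volume : Measure ℝ) C
  set P : ℝ → Prop := fun x =>
    Tendsto (fun r => volume (C ∩ Metric.closedBall x r) / volume (Metric.closedBall x r))
      (𝓝[>] 0) (𝓝 1) with hP
  have hnull : volume ({x | ¬ P x} ∩ C) = 0 := by
    have := hae
    rw [ae_iff, Measure.restrict_apply' hC] at this
    exact this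
  set N : Set ℝ := toMeasurable volume ({x | ¬ P x} ∩ C) with hN
  have hNnull : volume N = 0 := by rw [hN, measure_toMeasurable]; exact hnull
  refine ⟨C \ N, ⟨hC.diff (measurableSet_toMeasurable _ _), ?_⟩, diff_subset, ?_⟩
  · intro x hx
    have hxC : x ∈ C := hx.1
    have hxP : P x := by
      by_contra hc
      exact hx.2 (subset_toMeasurable _ _ ⟨hc, hxC⟩)
    have heq : ∀ h : ℝ, volume ((C \ N) ∩ Icc (x - h) (x + h)) / ENNReal.ofReal (2 * h)
        = volume (C ∩ Metric.closedBall x h) / volume (Metric.closedBall x h) := by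
      intro h
      have e1 : (C \ N) ∩ Icc (x - h) (x + h) = (C ∩ Icc (x - h) (x + h)) \ N := by
        ext y; simp [mem_diff]; tauto
      have e2 : volume ((C ∩ Icc (x - h) (x + h)) \ N) = volume (C ∩ Icc (x - h) (x + h)) :=
        measure_diff_null hNnull
      rw [e1, e2, Real.closedBall_eq_Icc, Real.volume_Icc]
      congr 1
      ring_nf
    unfold IsDensityPoint
    rw [funext heq]
    exact hxP
  · have : volume (C \ N) = volume C := measure_diff_null hNnull
    exact nonempty_of_measure_ne_zero (by rw [this]; exact h0)

/-- In the density topology, nowhere dense = meagre = nullset. -/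
theorem density_nowhereDense_iff_nullset (T : TopologicalSpace ℝ)
    (hT : ∀ s : Set ℝ, IsOpen[T] s ↔ DensityOpen s) (A : Set ℝ) :
    (@IsNowhereDense ℝ T A ↔ volume A = 0) ∧
    (@IsMeagre ℝ T A ↔ volume A = 0) := by
  have hnwd : ∀ B : Set ℝ, @IsNowhereDense ℝ T B ↔ volume B = 0 := by
    intro B
    letI : TopologicalSpace ℝ := T
    constructor
    · intro hB
      by_contra h0
      set C := closure B with hCdef
      have hCc : @IsClosed ℝ T C := isClosed_closure
      have hCo : DensityOpen Cᶜ := (hT Cᶜ).mp hCc.isOpen_compl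
      have hCm : MeasurableSet C := by
        have := hCo.1
        simpa using this.compl
      have hC0 : volume C ≠ 0 :=
        fun h => h0 (measure_mono_null (@subset_closure ℝ T B) h)
      obtain ⟨U, hUopen, hUC, hUne⟩ := exists_densityOpen_subset hCm hC0
      have hUint : U ⊆ interior C :=
        interior_maximal hUC ((hT U).mpr hUopen)
      rw [IsNowhereDense] at hB
      obtain ⟨x, hx⟩ := hUne
      exact absurd (hB ▸ hUint hx) (notMem_empty x)
    · intro h0
      set B' := toMeasurable volume B with hB'
      have hB'm : MeasurableSet B' := measurableSet_toMeasurable _ _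
      have hB'0 : volume B' = 0 := by rw [hB', measure_toMeasurable]; exact h0
      have hopen : IsOpen[T] B'ᶜ := (hT _).mpr (densityOpen_compl_of_null hB'm hB'0)
      have hclosed : @IsClosed ℝ T B' := ⟨hopen⟩
      have hsub : closure B ⊆ B' :=
        closure_minimal (subset_toMeasurable _ _) hclosed
      rw [IsNowhereDense, Set.eq_empty_iff_forall_notMem]
      intro x hx
      have hxB' : x ∈ interior B' :=
        interior_mono hsub hx
      have hio : DensityOpen (interior B') :=
        (hT _).mp isOpen_interior
      exact hio.volume_ne_zero hxB'
        (measure_mono_null interior_subset hB'0)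
  refine ⟨hnwd A, ?_, ?_⟩
  · intro hm
    obtain ⟨S, hS, hSc, hsub⟩ :=
      (@isMeagre_iff_countable_union_isNowhereDense ℝ T A).mp hm
    refine measure_mono_null hsub ?_
    rw [sUnion_eq_biUnion]
    exact (measure_biUnion_null_iff hSc).mpr fun t ht => (hnwd t).mp (hS t ht)
  · intro h0
    exact (@isMeagre_iff_countable_union_isNowhereDense ℝ T A).mpr
      ⟨{A}, by simpa using (hnwd A).mpr h0, countable_singleton A, by simp⟩
end

section
/- The density topology on ℝ is a Baire space. -/
open MeasureTheory Set Filter Topology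

lemma isDensityPoint_iff_ball (E : Set ℝ) (x : ℝ) :
    IsDensityPoint E x ↔
      Tendsto (fun r => volume (E ∩ Metric.closedBall x r) / volume (Metric.closedBall x r))
        (𝓝[>] 0) (𝓝 1) := by
  unfold IsDensityPoint
  simp only [Real.closedBall_eq_Icc, Real.volume_Icc,
    show ∀ r : ℝ, (x + r) - (x - r) = 2 * r from fun r => by ring]

lemma isDensityPoint_congr {A B : Set ℝ} (h : A =ᵐ[volume] B) (x : ℝ) :
    IsDensityPoint A x ↔ IsDensityPoint B x := by
  unfold IsDensityPoint
  have : ∀ r : ℝ, volume (A ∩ Icc (x - r) (x + r)) = volume (B ∩ Icc (x - r) (x + r)) := by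
    intro r
    exact measure_congr (h.inter (ae_eq_refl _))
  simp only [this]

/-- A nonempty density-open set has positive measure. -/
lemma densityOpen_pos {U : Set ℝ} (hU : DensityOpen U) (hne : U.Nonempty) :
    volume U ≠ 0 := by
  obtain ⟨x, hx⟩ := hne
  intro hU0
  have hd := hU.2 x hx
  have h0 : Tendsto (fun h : ℝ => volume (U ∩ Icc (x - h) (x + h)) / ENNReal.ofReal (2 * h))
      (𝓝[>] 0) (𝓝 0) := by
    have : ∀ r : ℝ, volume (U ∩ Icc (x - r) (x + r)) / ENNReal.ofReal (2 * r) = 0 := by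
      intro r
      have : volume (U ∩ Icc (x - r) (x + r)) = 0 :=
        le_antisymm (le_trans (measure_mono inter_subset_left) hU0.le) bot_le
      simp [this]
    simp only [this]
    exact tendsto_const_nhds
  exact zero_ne_one (tendsto_nhds_unique h0 hd)

/-- The regular part of a measurable set is density-open. -/
lemma exists_densityOpen_subset_s5 {s : Set ℝ} (hs : MeasurableSet s) :
    ∃ A : Set ℝ, DensityOpen A ∧ A ⊆ s ∧ A =ᵐ[volume] s := by
  set D := {x : ℝ | IsDensityPoint s x} with hD
  have hae : ∀ᵐ x ∂volume, x ∈ s → x ∈ D := by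
    filter_upwards [Besicovitch.ae_tendsto_measure_inter_div_of_measurableSet volume hs]
      with x hx hxs
    rw [hD, mem_setOf_eq, isDensityPoint_iff_ball]
    simpa [indicator_of_mem hxs] using hx
  have hnull : volume (s \ D) = 0 := by
    rw [ae_iff] at hae
    convert hae using 2
    ext y
    simp [mem_diff, _root_.not_imp]
  set N := toMeasurable volume (s \ D) with hN
  have hNnull : volume N = 0 := by rw [hN, measure_toMeasurable]; exact hnull
  have hAs : (s \ N : Set ℝ) =ᵐ[volume] s :=
    diff_ae_eq_self.2 (measure_mono_null inter_subset_right hNnull)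
  refine ⟨s \ N, ⟨hs.diff (measurableSet_toMeasurable _ _), ?_⟩, diff_subset, hAs⟩
  intro x hx
  have hxD : x ∈ D := by
    by_contra hxD
    exact hx.2 (subset_toMeasurable _ _ ⟨hx.1, hxD⟩)
  exact (isDensityPoint_congr hAs x).2 hxD

/-- The density topology on ℝ is a Baire space. -/
theorem density_topology_baireSpace (T : TopologicalSpace ℝ)
    (hT : ∀ s : Set ℝ, IsOpen[T] s ↔ DensityOpen s) :
    @BaireSpace ℝ T := by
  letI := T
  -- A dense open set has null complement.
  have key : ∀ D : Set ℝ, IsOpen D → Dense D → volume Dᶜ = 0 := by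
    intro D hDopen hDdense
    have hDmeas : MeasurableSet D := ((hT D).1 hDopen).1
    by_contra hpos
    obtain ⟨A, hA, hAsub, hAeq⟩ := exists_densityOpen_subset_s5 hDmeas.compl
    have hAne : A.Nonempty := by
      apply nonempty_of_measure_ne_zero (μ := volume)
      rw [measure_congr hAeq]
      exact hpos
    obtain ⟨x, hxA, hxD⟩ := hDdense.inter_open_nonempty A ((hT A).2 hA) hAne
    exact hAsub hxA hxD
  refine ⟨fun f hopen hdense => ?_⟩
  have hnull : volume (⋂ n, f n)ᶜ = 0 := by
    rw [compl_iInter]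
    exact measure_iUnion_null fun n => key (f n) (hopen n) (hdense n)
  rw [dense_iff_inter_open]
  intro U hUopen hUne
  rcases Set.eq_empty_or_nonempty (U ∩ ⋂ n, f n) with hemp | hne
  · exfalso
    have hsub : U ⊆ (⋂ n, f n)ᶜ := fun x hx hx' =>
      (Set.eq_empty_iff_forall_notMem.1 hemp x) ⟨hx, hx'⟩
    exact densityOpen_pos ((hT U).1 hUopen) hUne (measure_mono_null hsub hnull)
  · exact hne
end

section
/- The density topology on ℝ satisfies the countable chain condition (CCC): every pairwise disjoint family of nonempty density-open sets is countable. -/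
open MeasureTheory Set Filter Topology

lemma pos_of_densityOpen {E : Set ℝ} (hE : DensityOpen E) (hne : E.Nonempty) :
    0 < volume E := by
  obtain ⟨x, hx⟩ := hne
  by_contra h
  push_neg at h
  have h0 : volume E = 0 := le_antisymm h zero_le
  have hzero : Tendsto (fun h : ℝ => volume (E ∩ Icc (x - h) (x + h)) / ENNReal.ofReal (2 * h))
      (nhdsWithin 0 (Ioi 0)) (nhds 0) := by
    have : ∀ h : ℝ, volume (E ∩ Icc (x - h) (x + h)) / ENNReal.ofReal (2 * h) = 0 := by
      intro h
      have : volume (E ∩ Icc (x - h) (x + h)) = 0 :=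
        le_antisymm (h0 ▸ measure_mono inter_subset_left) zero_le
      simp [this]
    simp only [this]
    exact tendsto_const_nhds
  have := tendsto_nhds_unique (hE.2 x hx) hzero
  simp at this

/-- The density topology satisfies the countable chain condition. -/
theorem density_topology_ccc (S : Set (Set ℝ))
    (hopen : ∀ s ∈ S, DensityOpen s) (hne : ∀ s ∈ S, s.Nonempty)
    (hdisj : S.Pairwise Disjoint) : S.Countable := by
  have key : Set.Countable { s : S | 0 < volume (s : Set ℝ) } :=
    Measure.countable_meas_pos_of_disjoint_iUnion
      (As := fun s : S => (s : Set ℝ))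
      (fun s => (hopen s s.2).1)
      (fun s t hst => hdisj s.2 t.2 (fun h => hst (Subtype.ext h)))
  have : { s : S | 0 < volume (s : Set ℝ) } = Set.univ := by
    ext s
    simp [pos_of_densityOpen (hopen s s.2) (hne s s.2)]
  rw [this] at key
  have : Countable S := by
    rw [Set.countable_univ_iff] at key
    exact key
  exact (Set.countable_coe_iff).1 this
end

section
/- In the density topology on ℝ, every point-finite collection of nonempty open sets is countable (i.e., the density topology is strongly pseudo-ℵ₁-compact). -/
open MeasureTheory Set Filter Topology ENNReal

lemma pos_of_densityOpen_s7 {s : Set ℝ} (h : DensityOpen s) (hn : s.Nonempty) :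
    0 < volume s := by
  obtain ⟨x, hx⟩ := hn
  by_contra h0
  push_neg at h0
  have hvol : volume s = 0 := le_antisymm h0 (zero_le)
  have hd := h.2 x hx
  have heq : (fun h : ℝ => volume (s ∩ Icc (x - h) (x + h)) / ENNReal.ofReal (2 * h))
      = fun _ => (0 : ENNReal) := by
    funext t
    have : volume (s ∩ Icc (x - t) (x + t)) = 0 :=
      measure_mono_null inter_subset_left hvol
    simp [this]
  unfold IsDensityPoint at hd
  rw [heq] at hd
  have h1 : (0 : ENNReal) = 1 := tendsto_nhds_unique tendsto_const_nhds hd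
  simp at h1

lemma finite_of_ge (S : Set (Set ℝ)) (hmeas : ∀ s ∈ S, MeasurableSet s)
    (hpf : ∀ x : ℝ, {s ∈ S | x ∈ s}.Finite) (n k : ℕ) :
    {s ∈ S | ((k:ℝ≥0∞)+1)⁻¹ ≤ volume (s ∩ Icc (-(n:ℝ)) n)}.Finite := by
  classical
  set ε : ℝ≥0∞ := ((k:ℝ≥0∞)+1)⁻¹ with hε
  have hεpos : 0 < ε := by
    rw [hε, ENNReal.inv_pos]
    exact ENNReal.add_ne_top.mpr ⟨ENNReal.natCast_ne_top k, ENNReal.one_ne_top⟩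
  have hεtop : ε ≠ ⊤ := by simp [hε]
  by_contra hinf
  rw [← Set.not_infinite, not_not] at hinf
  obtain e := hinf.natEmbedding
  set I : Set ℝ := Icc (-(n:ℝ)) n with hI
  set t : ℕ → Set ℝ := fun i => (e i : Set ℝ) with ht
  have htS : ∀ i, t i ∈ S := fun i => (e i).2.1
  have htε : ∀ i, ε ≤ volume (t i ∩ I) := fun i => (e i).2.2
  have htinj : Function.Injective t := by
    intro i j hij
    exact e.injective (Subtype.ext hij)
  have htmeas : ∀ i, MeasurableSet (t i ∩ I) := fun i =>
    (hmeas _ (htS i)).inter measurableSet_Icc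
  -- point-finiteness of the sequence
  have hptfin : ∀ x : ℝ, {i : ℕ | x ∈ t i}.Finite := by
    intro x
    have : {i : ℕ | x ∈ t i} ⊆ t ⁻¹' {s ∈ S | x ∈ s} := by
      intro i hi; exact ⟨htS i, hi⟩
    exact ((hpf x).preimage (htinj.injOn)).subset this
  set f : ℝ → ℝ≥0∞ := fun x => ∑' i, (t i ∩ I).indicator 1 x with hf
  have hfmeas : Measurable f :=
    Measurable.ennreal_tsum fun i => measurable_one.indicator (htmeas i)
  have hffin : ∀ x, f x ≠ ⊤ := by
    intro x
    have hsub : (Function.support fun i => (t i ∩ I).indicator (1 : ℝ → ℝ≥0∞) x)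
        ⊆ {i : ℕ | x ∈ t i} := by
      intro i hi
      by_contra hxi
      have : (t i ∩ I).indicator (1 : ℝ → ℝ≥0∞) x = 0 := by
        apply Set.indicator_of_notMem
        exact fun hmem => hxi hmem.1
      exact hi this
    have hfin := (hptfin x).subset hsub
    rw [hf]
    simp only
    rw [tsum_eq_sum (s := hfin.toFinset) (fun i hi => by
      by_contra h'
      exact hi (hfin.mem_toFinset.mpr h'))]
    exact (ENNReal.sum_lt_top.mpr fun i _ => by
      by_cases hx : x ∈ t i ∩ I <;> simp [hx]).ne
  -- truncation sets
  set B : ℕ → Set ℝ := fun m => I ∩ {x | (m : ℝ≥0∞) < f x} with hB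
  have hBmeas : ∀ m, MeasurableSet (B m) := fun m =>
    measurableSet_Icc.inter (hfmeas measurableSet_Ioi)
  have hBanti : Antitone B := by
    intro a b hab
    apply inter_subset_inter_right
    intro x hx
    exact lt_of_le_of_lt ((Nat.cast_le (α := ℝ≥0∞)).mpr hab) hx
  have hBempty : ⋂ m, B m = ∅ := by
    ext x
    simp only [mem_iInter, mem_empty_iff_false, iff_false]
    intro hall
    obtain ⟨m, hm⟩ := ENNReal.exists_nat_gt (hffin x)
    exact absurd ((hall m).2) (not_lt.mpr hm.le)
  have hBfin : volume (B 0) ≠ ⊤ := by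
    refine ne_top_of_le_ne_top ?_ (measure_mono inter_subset_left)
    simp [hI]
  have htend : Tendsto (fun m => volume (B m)) atTop (nhds 0) := by
    have := MeasureTheory.tendsto_measure_iInter_atTop (μ := volume)
      (fun m => (hBmeas m).nullMeasurableSet) hBanti ⟨0, hBfin⟩
    rwa [hBempty, measure_empty] at this
  obtain ⟨m, hm⟩ : ∃ m, volume (B m) < ε / 2 :=
    ((htend.eventually (gt_mem_nhds (by
      exact ENNReal.div_pos hεpos.ne' ENNReal.ofNat_ne_top))).exists)
  -- the good pieces
  set E : ℕ → Set ℝ := fun i => t i ∩ I ∩ {x | f x ≤ m} with hE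
  have hEmeas : ∀ i, MeasurableSet (E i) := fun i =>
    (htmeas i).inter (hfmeas measurableSet_Iic)
  have hElb : ∀ i, ε / 2 ≤ volume (E i) := by
    intro i
    by_contra hlt
    push_neg at hlt
    have hcover : t i ∩ I ⊆ E i ∪ B m := by
      intro x hx
      by_cases hfx : f x ≤ m
      · exact Or.inl ⟨hx, hfx⟩
      · exact Or.inr ⟨hx.2, not_le.mp hfx⟩
    have : volume (t i ∩ I) < ε := by
      calc volume (t i ∩ I) ≤ volume (E i) + volume (B m) :=
            le_trans (measure_mono hcover) (measure_union_le _ _)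
        _ < ε / 2 + ε / 2 := ENNReal.add_lt_add hlt hm
        _ = ε := ENNReal.add_halves ε
    exact absurd (htε i) (not_le.mpr this)
  -- sum of measures is infinite
  have hsum_top : ∑' i, volume (E i) = ⊤ := by
    have : ∑' (_ : ℕ), ε / 2 ≤ ∑' i, volume (E i) := ENNReal.tsum_le_tsum hElb
    rw [ENNReal.tsum_const_eq_top_of_ne_zero (by
      exact (ENNReal.div_pos hεpos.ne' ENNReal.ofNat_ne_top).ne')] at this
    exact top_le_iff.mp this
  -- but it equals an integral bounded by m * volume I
  have hsum_eq : ∑' i, volume (E i) = ∫⁻ x, ∑' i, (E i).indicator 1 x := by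
    calc ∑' i, volume (E i) = ∑' i, ∫⁻ x, (E i).indicator 1 x := by
          congr 1
          funext i
          rw [MeasureTheory.lintegral_indicator_one (hEmeas i)]
      _ = ∫⁻ x, ∑' i, (E i).indicator 1 x :=
          (MeasureTheory.lintegral_tsum (fun i =>
            (measurable_one.indicator (hEmeas i)).aemeasurable)).symm
  have hbound : (fun x => ∑' i, (E i).indicator (1 : ℝ → ℝ≥0∞) x) ≤
      (I.indicator fun _ => (m : ℝ≥0∞)) := by
    intro x
    by_cases hxI : x ∈ I ∧ f x ≤ m
    · calc ∑' i, (E i).indicator (1 : ℝ → ℝ≥0∞) x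
          ≤ ∑' i, (t i ∩ I).indicator (1 : ℝ → ℝ≥0∞) x := by
            apply ENNReal.tsum_le_tsum
            intro i
            apply Set.indicator_le_indicator_of_subset (fun y hy => hy.1)
            intro y; exact zero_le
        _ = f x := rfl
        _ ≤ m := hxI.2
        _ ≤ I.indicator (fun _ => (m : ℝ≥0∞)) x := by
            rw [Set.indicator_of_mem hxI.1]
    · have : ∀ i, (E i).indicator (1 : ℝ → ℝ≥0∞) x = 0 := by
        intro i
        apply Set.indicator_of_notMem
        rintro ⟨⟨_, hxI'⟩, hfx⟩
        exact hxI ⟨hxI', hfx⟩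
      simp only [this, tsum_zero]
      exact zero_le
  have hint : (∫⁻ x, ∑' i, (E i).indicator 1 x) ≤ m * volume I := by
    calc (∫⁻ x, ∑' i, (E i).indicator 1 x)
        ≤ ∫⁻ x, I.indicator (fun _ => (m : ℝ≥0∞)) x := lintegral_mono hbound
      _ = m * volume I := by
          rw [MeasureTheory.lintegral_indicator_const measurableSet_Icc]
  have hfin2 : (m : ℝ≥0∞) * volume I ≠ ⊤ := by
    apply ENNReal.mul_ne_top (ENNReal.natCast_ne_top m)
    simp [hI]
  rw [hsum_eq] at hsum_top
  rw [hsum_top] at hint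
  exact hfin2 (top_le_iff.mp hint)

/-- Every point-finite family of nonempty density-open sets is countable. -/
theorem density_topology_pointFinite_countable (S : Set (Set ℝ))
    (hopen : ∀ s ∈ S, DensityOpen s) (hne : ∀ s ∈ S, s.Nonempty)
    (hpf : ∀ x : ℝ, {s ∈ S | x ∈ s}.Finite) : S.Countable := by
  have hcover : S ⊆ ⋃ (n : ℕ) (k : ℕ),
      {s ∈ S | ((k:ℝ≥0∞)+1)⁻¹ ≤ volume (s ∩ Icc (-(n:ℝ)) n)} := by
    intro s hs
    have hpos : 0 < volume s := pos_of_densityOpen_s7 (hopen s hs) (hne s hs)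
    have hn : ∃ n : ℕ, 0 < volume (s ∩ Icc (-(n:ℝ)) n) := by
      by_contra hc
      push_neg at hc
      have hzero : ∀ n : ℕ, volume (s ∩ Icc (-(n:ℝ)) n) = 0 := fun n =>
        le_antisymm (hc n) (zero_le)
      have hsub : s ⊆ ⋃ n : ℕ, s ∩ Icc (-(n:ℝ)) n := by
        intro x hx
        obtain ⟨n, hn⟩ := exists_nat_ge |x|
        exact mem_iUnion.mpr ⟨n, hx, by
          constructor
          · linarith [neg_abs_le x]
          · linarith [le_abs_self x]⟩
      have : volume s = 0 :=
        measure_mono_null hsub (measure_iUnion_null hzero)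
      exact absurd this hpos.ne'
    obtain ⟨n, hn⟩ := hn
    have hk : ∃ k : ℕ, ((k:ℝ≥0∞)+1)⁻¹ ≤ volume (s ∩ Icc (-(n:ℝ)) n) := by
      obtain ⟨k, hk⟩ := ENNReal.exists_inv_nat_lt hn.ne'
      refine ⟨k, le_trans ?_ hk.le⟩
      exact ENNReal.inv_le_inv.mpr (le_add_of_nonneg_right (zero_le))
    obtain ⟨k, hk⟩ := hk
    exact mem_iUnion.mpr ⟨n, mem_iUnion.mpr ⟨k, hs, hk⟩⟩
  refine Set.Countable.mono hcover ?_
  exact Set.countable_iUnion fun n => Set.countable_iUnion fun k =>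
    (finite_of_ge S (fun s hs => (hopen s hs).1) hpf n k).countable
end

section
/- Every locally finite collection of nonempty open sets in the density topology on ℝ is countable (pseudo-ℵ₁-compactness of the density topology). -/
open MeasureTheory Set Filter Topology
open scoped ENNReal

lemma aux_finite (A : Set ℝ) (hA : MeasurableSet A) (hAfin : volume A ≠ ⊤)
    (s : ℕ → Set ℝ) (hmeas : ∀ i, MeasurableSet (s i))
    (hpt : ∀ x : ℝ, {i : ℕ | x ∈ s i}.Finite)
    (ε : ℝ≥0∞) (hε0 : ε ≠ 0) (hεtop : ε ≠ ⊤)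
    (hle : ∀ i, ε ≤ volume (s i ∩ A)) : False := by
  set f : ℝ → ℝ≥0∞ := fun x => ∑' i, (s i).indicator 1 x with hfdef
  have hfmeas : Measurable f :=
    Measurable.ennreal_tsum fun i => measurable_one.indicator (hmeas i)
  have hffin : ∀ x, f x ≠ ⊤ := by
    intro x
    have h1 : f x = ∑ i ∈ (hpt x).toFinset, (s i).indicator 1 x := by
      refine tsum_eq_sum ?_
      intro i hi
      simp only [Set.Finite.mem_toFinset, mem_setOf_eq] at hi
      exact Set.indicator_of_notMem hi _
    rw [h1]
    refine (ENNReal.sum_lt_top.2 fun i _ => ?_).ne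
    have : (s i).indicator (1 : ℝ → ℝ≥0∞) x ≤ 1 := by
      classical
      rw [Set.indicator_apply]
      split_ifs <;> simp
    exact lt_of_le_of_lt this ENNReal.one_lt_top
  set C : ℕ → Set ℝ := fun m => {x ∈ A | (m : ℝ≥0∞) < f x} with hCdef
  have hCmeas : ∀ m, MeasurableSet (C m) := fun m =>
    hA.inter (hfmeas measurableSet_Ioi)
  have hCanti : Antitone C := by
    intro m m' h x hx
    exact ⟨hx.1, lt_of_le_of_lt (by exact_mod_cast Nat.cast_le.2 h) hx.2⟩
  have hCempty : ⋂ m, C m = ∅ := by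
    ext x
    simp only [mem_iInter, mem_empty_iff_false, iff_false]
    intro hx
    obtain ⟨n, hn⟩ := ENNReal.exists_nat_gt (hffin x)
    exact absurd (hx n).2 (not_lt.2 hn.le)
  have htend : Tendsto (fun m => volume (C m)) atTop (𝓝 0) := by
    have h := tendsto_measure_iInter_atTop (fun m => (hCmeas m).nullMeasurableSet) hCanti
      ⟨0, ((measure_mono (fun x hx => hx.1)).trans_lt (lt_top_iff_ne_top.2 hAfin)).ne⟩
    rw [hCempty] at h
    rwa [measure_empty] at h
  obtain ⟨m, hm⟩ := (htend.eventually_lt_const (ENNReal.half_pos hε0)).exists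
  set B : Set ℝ := {x ∈ A | f x ≤ (m : ℝ≥0∞)} with hBdef
  have hBmeas : MeasurableSet B := hA.inter (hfmeas measurableSet_Iic)
  have hkey : ∀ i, ε / 2 ≤ volume (s i ∩ B) := by
    intro i
    have hsub : s i ∩ A ⊆ (s i ∩ B) ∪ C m := by
      rintro x ⟨hxs, hxA⟩
      rcases le_or_gt (f x) (m : ℝ≥0∞) with h | h
      · exact Or.inl ⟨hxs, hxA, h⟩
      · exact Or.inr ⟨hxA, h⟩
    have h1 : ε ≤ volume (s i ∩ B) + volume (C m) :=
      (hle i).trans ((measure_mono hsub).trans (measure_union_le _ _))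
    have h2 : ε ≤ volume (s i ∩ B) + ε / 2 :=
      h1.trans (add_le_add le_rfl hm.le)
    calc ε / 2 = ε - ε / 2 := (ENNReal.sub_half hεtop).symm
    _ ≤ volume (s i ∩ B) := tsub_le_iff_right.2 h2
  have hint : ∫⁻ x in B, f x = ∑' i, volume (s i ∩ B) := by
    rw [hfdef]
    rw [lintegral_tsum fun i => (measurable_one.indicator (hmeas i)).aemeasurable]
    congr 1
    ext i
    rw [lintegral_indicator_one (hmeas i), Measure.restrict_apply (hmeas i)]
  have hbound : ∫⁻ x in B, f x ≤ (m : ℝ≥0∞) * volume A := by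
    calc ∫⁻ x in B, f x ≤ ∫⁻ _ in B, (m : ℝ≥0∞) :=
          setLIntegral_mono' hBmeas fun x hx => hx.2
    _ = (m : ℝ≥0∞) * volume B := by rw [setLIntegral_const]
    _ ≤ (m : ℝ≥0∞) * volume A :=
          mul_le_mul_right (measure_mono fun x hx => hx.1) _
  have htop : (⊤ : ℝ≥0∞) ≤ ∑' i, volume (s i ∩ B) := by
    calc (⊤ : ℝ≥0∞) = ∑' _ : ℕ, ε / 2 :=
          (ENNReal.tsum_const_eq_top_of_ne_zero (ENNReal.half_pos hε0).ne').symm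
    _ ≤ _ := ENNReal.tsum_le_tsum hkey
  have hcontr : (⊤ : ℝ≥0∞) ≤ (m : ℝ≥0∞) * volume A := htop.trans (hint ▸ hbound)
  exact ENNReal.mul_ne_top (ENNReal.natCast_ne_top m) hAfin (top_le_iff.1 hcontr)

lemma densityOpen_vol_ne_zero {s : Set ℝ} (h : DensityOpen s) (hne : s.Nonempty) :
    volume s ≠ 0 := by
  obtain ⟨x, hx⟩ := hne
  intro h0
  have hd := h.2 x hx
  have hz : Tendsto (fun h : ℝ => volume (s ∩ Icc (x - h) (x + h)) / ENNReal.ofReal (2 * h))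
      (nhdsWithin 0 (Ioi 0)) (𝓝 0) := by
    have heq : ∀ h : ℝ, volume (s ∩ Icc (x - h) (x + h)) / ENNReal.ofReal (2 * h) = 0 := by
      intro h
      rw [measure_mono_null inter_subset_left h0, ENNReal.zero_div]
    simp only [heq]
    exact tendsto_const_nhds
  exact one_ne_zero (tendsto_nhds_unique hd hz)

/-- Every locally finite family of nonempty density-open sets is countable. -/
theorem density_topology_locallyFinite_countable (S : Set (Set ℝ))
    (hopen : ∀ s ∈ S, DensityOpen s) (hne : ∀ s ∈ S, s.Nonempty)
    (hlf : ∀ x : ℝ, ∃ U : Set ℝ, DensityOpen U ∧ x ∈ U ∧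
      {s ∈ S | (s ∩ U).Nonempty}.Finite) : S.Countable := by
  have hpt : ∀ x : ℝ, {s ∈ S | x ∈ s}.Finite := by
    intro x
    obtain ⟨U, _, hxU, hfin⟩ := hlf x
    exact hfin.subset fun s hs => ⟨hs.1, x, hs.2, hxU⟩
  have hfin' : ∀ n k : ℕ,
      {s ∈ S | ((k : ℝ≥0∞) + 1)⁻¹ < volume (s ∩ Icc (-(n : ℝ)) n)}.Finite := by
    intro n k
    by_contra hinf
    set e := Set.Infinite.natEmbedding _ hinf with he
    set t : ℕ → Set ℝ := fun i => (e i : Set ℝ) with ht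
    have htS : ∀ i, t i ∈ S := fun i => (e i).2.1
    have htinj : Function.Injective t := fun i j h => e.injective (Subtype.ext h)
    refine aux_finite (Icc (-(n : ℝ)) n) measurableSet_Icc
      (by rw [Real.volume_Icc]; exact ENNReal.ofReal_ne_top)
      t (fun i => (hopen _ (htS i)).1) ?_ (((k : ℝ≥0∞) + 1)⁻¹)
      (ENNReal.inv_ne_zero.2 (by simp))
      (ENNReal.inv_ne_top.2 (by simp))
      (fun i => (e i).2.2.le)
    intro x
    refine ((hpt x).preimage htinj.injOn).subset ?_
    intro i hi
    exact ⟨htS i, hi⟩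
  have hcov : S ⊆ ⋃ (n : ℕ) (k : ℕ),
      {s ∈ S | ((k : ℝ≥0∞) + 1)⁻¹ < volume (s ∩ Icc (-(n : ℝ)) n)} := by
    intro s hs
    have hpos : volume s ≠ 0 := densityOpen_vol_ne_zero (hopen s hs) (hne s hs)
    have hex : ∃ n : ℕ, volume (s ∩ Icc (-(n : ℝ)) n) ≠ 0 := by
      by_contra hc
      push_neg at hc
      apply hpos
      have hsub : s ⊆ ⋃ n : ℕ, s ∩ Icc (-(n : ℝ)) n := by
        intro x hx
        obtain ⟨n, hn⟩ := exists_nat_ge |x|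
        exact mem_iUnion.2 ⟨n, hx, (abs_le.1 hn).1, (abs_le.1 hn).2⟩
      exact measure_mono_null hsub (measure_iUnion_null hc)
    obtain ⟨n, hn⟩ := hex
    obtain ⟨k, hk⟩ := ENNReal.exists_inv_nat_lt hn
    refine mem_iUnion.2 ⟨n, mem_iUnion.2 ⟨k, hs, lt_of_le_of_lt ?_ hk⟩⟩
    exact ENNReal.inv_le_inv' le_self_add
  exact Set.Countable.mono hcov
    (Set.countable_iUnion fun n => Set.countable_iUnion fun k => (hfin' n k).countable)
end

section
/- A subset A of ℝ with the subspace density topology is pseudocompact and has all its closed subspaces pseudocompact (weakly hereditarily pseudocompact) if and only if A is finite. -/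
open MeasureTheory Set Filter Topology

/-- A space is pseudocompact: every continuous real-valued function is bounded. -/
def Pseudocompact (X : Type*) [TopologicalSpace X] : Prop :=
  ∀ f : X → ℝ, Continuous f → ∃ M : ℝ, ∀ x, |f x| ≤ M

/-- The complement of a countable set is open in the density topology. -/
lemma densityOpen_compl_of_countable {N : Set ℝ} (hN : N.Countable) :
    DensityOpen Nᶜ := by
  refine ⟨hN.measurableSet.compl, fun x _ => ?_⟩
  have hnull : volume N = 0 := hN.measure_zero volume
  refine Tendsto.congr' ?_ (tendsto_const_nhds : Tendsto (fun _ : ℝ => (1 : ENNReal)) _ _)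
  filter_upwards [self_mem_nhdsWithin] with h (hh : 0 < h)
  have : Nᶜ ∩ Icc (x - h) (x + h) = Icc (x - h) (x + h) \ N := by
    rw [Set.diff_eq, Set.inter_comm]
  rw [this, measure_diff_null hnull, Real.volume_Icc,
    show x + h - (x - h) = 2 * h by ring,
    ENNReal.div_self (by simp [ENNReal.ofReal_pos]; linarith) ENNReal.ofReal_ne_top]

/-- Any finite subspace is pseudocompact. -/
lemma pseudocompact_of_finite (X : Type*) [TopologicalSpace X] [Finite X] :
    Pseudocompact X := by
  intro f _
  cases isEmpty_or_nonempty X with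
  | inl h => exact ⟨0, fun x => (h.false x).elim⟩
  | inr h =>
    obtain ⟨x₀, hx₀⟩ := Finite.exists_max (fun x => |f x|)
    exact ⟨|f x₀|, hx₀⟩

/-- A subspace of the density topology is weakly hereditarily pseudocompact iff
it is finite. -/
theorem density_weakly_hereditarily_pseudocompact_iff_finite
    (T : TopologicalSpace ℝ) (hT : ∀ s : Set ℝ, IsOpen[T] s ↔ DensityOpen s)
    (A : Set ℝ) :
    (@Pseudocompact A (TopologicalSpace.induced Subtype.val T) ∧
      ∀ B ⊆ A, (∃ C : Set ℝ, IsClosed[T] C ∧ B = C ∩ A) →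
        @Pseudocompact B (TopologicalSpace.induced Subtype.val T)) ↔
      A.Finite := by
  constructor
  · rintro ⟨-, hB⟩
    by_contra hinf
    have hinf : A.Infinite := hinf
    obtain e := hinf.natEmbedding
    set g : ℕ → ℝ := fun n => (e n : ℝ) with hg
    have hginj : Function.Injective g :=
      fun m n h => e.injective (Subtype.val_injective h)
    set B : Set ℝ := Set.range g with hBdef
    have hBA : B ⊆ A := by
      rintro x ⟨n, rfl⟩; exact (e n).2
    have hBcnt : B.Countable := Set.countable_range g
    -- B is closed in T
    have hBclosed : IsClosed[T] B := by
      constructor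
      exact (hT Bᶜ).2 (densityOpen_compl_of_countable hBcnt)
    -- the subspace topology on B is discrete
    letI tB : TopologicalSpace B := TopologicalSpace.induced Subtype.val T
    haveI : DiscreteTopology B := by
      rw [discreteTopology_iff_isOpen_singleton]
      intro a
      have hU : IsOpen[T] (B \ {(a : ℝ)})ᶜ :=
        (hT _).2 (densityOpen_compl_of_countable (hBcnt.mono Set.diff_subset))
      refine ⟨(B \ {(a : ℝ)})ᶜ, hU, ?_⟩
      ext y
      simp only [Set.mem_preimage, Set.mem_compl_iff, Set.mem_diff,
        Set.mem_singleton_iff]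
      constructor
      · intro h
        by_cases hy : (y : ℝ) = (a : ℝ)
        · exact Subtype.ext hy
        · exact absurd ⟨y.2, hy⟩ h
      · rintro rfl; rintro ⟨-, h⟩; exact h rfl
    -- unbounded continuous function on B
    have hps := hB B hBA ⟨B, hBclosed, (Set.inter_eq_left.2 hBA).symm⟩
    set eq : ℕ ≃ B := Equiv.ofInjective g hginj
    set f : B → ℝ := fun x => ((eq.symm x : ℕ) : ℝ)
    obtain ⟨M, hM⟩ := hps f (@continuous_of_discreteTopology B tB ‹_› ℝ UniformSpace.toTopologicalSpace f)
    have hn : ∀ n : ℕ, (n : ℝ) ≤ M := by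
      intro n
      have := hM (eq n)
      rwa [show f (eq n) = (n : ℝ) by simp [f, eq],
        abs_of_nonneg (Nat.cast_nonneg n)] at this
    obtain ⟨n, hn'⟩ := exists_nat_gt M
    exact absurd (hn n) (not_le.2 hn')
  · intro hA
    have key : ∀ S : Set ℝ, S.Finite →
        @Pseudocompact S (TopologicalSpace.induced Subtype.val T) := by
      intro S hS
      haveI : Finite S := hS.to_subtype
      letI : TopologicalSpace S := TopologicalSpace.induced Subtype.val T
      exact pseudocompact_of_finite S
    exact ⟨key A hA, fun B hBA _ => key B (hA.subset hBA)⟩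
end

section
/- Every infinite subset A of ℝ with the density topology fails to be countably compact; consequently, every countably compact subspace of the density topology is finite. -/
open MeasureTheory Set Filter Topology

/-- A space is countably compact: every countable open cover has a finite subcover. -/
def CountablyCompact (X : Type*) [TopologicalSpace X] : Prop :=
  ∀ U : ℕ → Set X, (∀ n, IsOpen (U n)) → (⋃ n, U n) = Set.univ →
    ∃ F : Finset ℕ, (⋃ n ∈ F, U n) = Set.univ

lemma countable_measurableSet {S : Set ℝ} (h : S.Countable) : MeasurableSet S :=
  h.measurableSet

lemma densityOpen_of_compl_null {E : Set ℝ} (hm : MeasurableSet E)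
    (h0 : volume Eᶜ = 0) : DensityOpen E := by
  refine ⟨hm, fun x _ => ?_⟩
  have heq : ∀ᶠ h in nhdsWithin (0:ℝ) (Ioi 0),
      volume (E ∩ Icc (x - h) (x + h)) / ENNReal.ofReal (2 * h) = 1 := by
    filter_upwards [self_mem_nhdsWithin] with h hh
    have h1 : volume (E ∩ Icc (x - h) (x + h)) = volume (Icc (x - h) (x + h)) := by
      rw [Set.inter_comm]
      exact measure_inter_conull h0
    rw [h1, Real.volume_Icc, show x + h - (x - h) = 2 * h by ring]
    have hh' : (0:ℝ) < h := hh
    exact ENNReal.div_self (by simp [(by positivity : (0:ℝ) < 2 * h), hh'])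
      ENNReal.ofReal_ne_top
  exact Tendsto.congr' (heq.mono fun a ha => ha.symm) tendsto_const_nhds

/-- Infinite subspaces of the density topology are not countably compact; hence
countably compact subspaces are finite. -/
theorem density_countablyCompact_iff_finite (T : TopologicalSpace ℝ)
    (hT : ∀ s : Set ℝ, IsOpen[T] s ↔ DensityOpen s) :
    (∀ A : Set ℝ, A.Infinite →
      ¬ @CountablyCompact A (TopologicalSpace.induced Subtype.val T)) ∧
    (∀ A : Set ℝ, @CountablyCompact A (TopologicalSpace.induced Subtype.val T) →
      A.Finite) := by
  have main : ∀ A : Set ℝ, A.Infinite →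
      ¬ @CountablyCompact A (TopologicalSpace.induced Subtype.val T) := by
    intro A hA hcc
    letI : TopologicalSpace A := TopologicalSpace.induced Subtype.val T
    set f : ℕ ↪ A := hA.natEmbedding with hf
    set D : ℕ → Set ℝ := fun n => {y | ∃ k > n, y = ((f k : A) : ℝ)} with hD
    have hDcount : ∀ n, (D n).Countable := by
      intro n
      have : D n = (fun k => ((f k : A) : ℝ)) '' {k | k > n} := by
        ext y; simp [hD, eq_comm]
      rw [this]
      exact (Set.to_countable _).image _
    set U : ℕ → Set ℝ := fun n => (D n)ᶜ with hU
    have hUopen : ∀ n, IsOpen[T] (U n) := by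
      intro n
      rw [hT]
      exact densityOpen_of_compl_null (countable_measurableSet (hDcount n)).compl
        (by rw [hU]; simpa using (hDcount n).measure_zero volume)
    set V : ℕ → Set A := fun n => Subtype.val ⁻¹' (U n) with hV
    have hVopen : ∀ n, IsOpen (V n) := fun n =>
      isOpen_induced_iff.mpr ⟨U n, hUopen n, rfl⟩
    have hVcover : (⋃ n, V n) = Set.univ := by
      ext a
      simp only [Set.mem_iUnion, Set.mem_univ, iff_true, hV, Set.mem_preimage]
      by_contra hcon
      push_neg at hcon
      have h0 : (a : ℝ) ∈ D 0 := by
        have := hcon 0; simpa [hU] using this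
      obtain ⟨k, -, hk⟩ := h0
      have h1 : (a : ℝ) ∈ D k := by
        have := hcon k; simpa [hU] using this
      obtain ⟨j, hjk, hj⟩ := h1
      have : (f k : A) = (f j : A) := Subtype.val_injective (hk ▸ hj)
      exact absurd (f.injective this) (Nat.ne_of_lt hjk)
    obtain ⟨F, hF⟩ := hcc V hVopen hVcover
    set m : ℕ := F.sup id + 1 with hm
    have : (f m : A) ∈ ⋃ n ∈ F, V n := hF ▸ Set.mem_univ _
    simp only [Set.mem_iUnion] at this
    obtain ⟨n, hnF, hn⟩ := this
    have hnm : n < m := Nat.lt_succ_of_le (Finset.le_sup (f := id) hnF)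
    exact hn ⟨m, hnm, rfl⟩
  exact ⟨main, fun A hcc => by
    by_contra hfin
    exact main A hfin hcc⟩
end

section
/- The density topology on ℝ is nodec: every nowhere dense subset of (ℝ, 𝒯) is closed (indeed closed and discrete). -/
open MeasureTheory Set Filter Topology

/-- The complement of a null set has density one at every point. -/
lemma isDensityPoint_of_compl_null {S : Set ℝ} (hS : volume Sᶜ = 0) (x : ℝ) :
    IsDensityPoint S x := by
  have key : ∀ h : ℝ, 0 < h →
      volume (S ∩ Icc (x - h) (x + h)) / ENNReal.ofReal (2 * h) = 1 := by
    intro h hh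
    have hIcc : volume (Icc (x - h) (x + h)) = ENNReal.ofReal (2 * h) := by
      rw [Real.volume_Icc]; ring_nf
    have h1 : volume (S ∩ Icc (x - h) (x + h)) = ENNReal.ofReal (2 * h) := by
      refine le_antisymm ?_ ?_
      · exact hIcc ▸ measure_mono inter_subset_right
      · calc ENNReal.ofReal (2 * h) = volume (Icc (x - h) (x + h)) := hIcc.symm
          _ ≤ volume (S ∩ Icc (x - h) (x + h)) + volume (Icc (x - h) (x + h) \ S) := by
              refine (measure_mono ?_).trans (measure_union_le _ _)
              intro y hy
              by_cases hyS : y ∈ S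
              · exact Or.inl ⟨hyS, hy⟩
              · exact Or.inr ⟨hy, hyS⟩
          _ = volume (S ∩ Icc (x - h) (x + h)) := by
              rw [measure_mono_null (diff_subset_compl _ _) hS, add_zero]
    rw [h1, ENNReal.div_self]
    · simp [ENNReal.ofReal_eq_zero]; linarith
    · exact ENNReal.ofReal_ne_top
  have : ∀ᶠ h in nhdsWithin (0:ℝ) (Ioi 0),
      volume (S ∩ Icc (x - h) (x + h)) / ENNReal.ofReal (2 * h) = 1 :=
    eventually_nhdsWithin_of_forall fun h hh => key h hh
  exact Tendsto.congr' (this.mono fun h hh => hh.symm) tendsto_const_nhds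

/-- Almost every point of a measurable set is a density point of it. -/
lemma ae_isDensityPoint {C : Set ℝ} (hC : MeasurableSet C) :
    volume {x ∈ C | ¬ IsDensityPoint C x} = 0 := by
  have H := Besicovitch.ae_tendsto_measure_inter_div_of_measurableSet volume hC
  rw [ae_iff] at H
  refine measure_mono_null ?_ H
  rintro x ⟨hxC, hxD⟩
  simp only [mem_setOf_eq]
  intro hx
  apply hxD
  have hfun : (fun r => volume (C ∩ Metric.closedBall x r) / volume (Metric.closedBall x r))
      = fun h : ℝ => volume (C ∩ Icc (x - h) (x + h)) / ENNReal.ofReal (2 * h) := by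
    funext r
    rw [Real.closedBall_eq_Icc, Real.volume_Icc]
    congr 2
    ring
  have hind : C.indicator (1 : ℝ → ENNReal) x = 1 := indicator_of_mem hxC 1
  rw [hfun, hind] at hx
  exact hx

lemma measurableSet_singleton' (x : ℝ) : MeasurableSet {x} := measurableSet_singleton x

/-- Transfer measure of intersections across a null difference. -/
lemma measure_inter_congr {C D : Set ℝ} (hDC : D ⊆ C) (hnull : volume (C \ D) = 0)
    (I : Set ℝ) : volume (D ∩ I) = volume (C ∩ I) := by
  refine le_antisymm (measure_mono (inter_subset_inter_left _ hDC)) ?_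
  calc volume (C ∩ I) ≤ volume ((D ∩ I) ∪ (C \ D)) := by
        refine measure_mono fun y hy => ?_
        by_cases hyD : y ∈ D
        · exact Or.inl ⟨hyD, hy.2⟩
        · exact Or.inr ⟨hy.1, hyD⟩
    _ ≤ volume (D ∩ I) + volume (C \ D) := measure_union_le _ _
    _ = volume (D ∩ I) := by rw [hnull, add_zero]

/-- The density topology is nodec: nowhere dense sets are closed (and discrete). -/
theorem density_topology_nodec (T : TopologicalSpace ℝ)
    (hT : ∀ s : Set ℝ, IsOpen[T] s ↔ DensityOpen s) (A : Set ℝ)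
    (hA : @IsNowhereDense ℝ T A) :
    IsClosed[T] A ∧ ∀ x ∈ A, ∃ U : Set ℝ, DensityOpen U ∧ U ∩ A = {x} := by
  set C := @closure ℝ T A with hCdef
  have hA' : @interior ℝ T C = ∅ := hA
  have hCclosed : IsClosed[T] C := @isClosed_closure ℝ T A
  have hopen : IsOpen[T] Cᶜ := (@isOpen_compl_iff ℝ C T).mpr hCclosed
  have hDO : DensityOpen Cᶜ := (hT _).mp hopen
  have hCmeas : MeasurableSet C := by simpa using hDO.1.compl
  -- Step 1 : C is a null set
  have hCnull : volume C = 0 := by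
    by_contra hpos
    set ND := {x ∈ C | ¬ IsDensityPoint C x} with hNDdef
    have hndnull : volume ND = 0 := ae_isDensityPoint hCmeas
    set E := toMeasurable volume ND with hEdef
    have hEnull : volume E = 0 := by rw [hEdef, measure_toMeasurable]; exact hndnull
    set D := C \ E with hDdef
    have hDmeas : MeasurableSet D := hCmeas.diff (measurableSet_toMeasurable _ _)
    have hDC : D ⊆ C := diff_subset
    have hCDnull : volume (C \ D) = 0 := by
      refine measure_mono_null (fun y hy => ?_) hEnull
      rcases hy with ⟨hyC, hyD⟩
      by_contra hyE
      exact hyD ⟨hyC, hyE⟩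
    have hDpos : volume D ≠ 0 := by
      intro h0
      apply hpos
      refine le_antisymm ?_ zero_le
      calc volume C ≤ volume (D ∪ (C \ D)) := measure_mono (by
              intro y hy
              by_cases hyD : y ∈ D
              · exact Or.inl hyD
              · exact Or.inr ⟨hy, hyD⟩)
        _ ≤ volume D + volume (C \ D) := measure_union_le _ _
        _ = 0 := by rw [h0, hCDnull, add_zero]
    have hDopen : DensityOpen D := by
      refine ⟨hDmeas, fun x hx => ?_⟩
      have hxC : x ∈ C := hx.1
      have hxdp : IsDensityPoint C x := by
        by_contra hxd
        exact hx.2 (subset_toMeasurable volume ND ⟨hxC, hxd⟩)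
      have : ∀ h : ℝ, volume (D ∩ Icc (x - h) (x + h)) = volume (C ∩ Icc (x - h) (x + h)) :=
        fun h => measure_inter_congr hDC hCDnull _
      unfold IsDensityPoint
      simpa only [IsDensityPoint, this] using hxdp
    have hsub : D ⊆ @interior ℝ T C :=
      @interior_maximal ℝ T C D hDC ((hT D).mpr hDopen)
    rw [hA'] at hsub
    obtain ⟨x, hx⟩ := nonempty_of_measure_ne_zero hDpos
    exact hsub hx
  -- Step 2 : A = C
  have hAC : A = C := by
    refine subset_antisymm (@subset_closure ℝ T A) fun x hxC => ?_
    by_contra hxA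
    have hVopen : DensityOpen (Cᶜ ∪ {x}) := by
      refine ⟨hDO.1.union (measurableSet_singleton' x), fun y _ => ?_⟩
      refine isDensityPoint_of_compl_null ?_ y
      refine measure_mono_null (fun z hz => ?_) hCnull
      simp only [compl_union, mem_inter_iff, mem_compl_iff, not_not] at hz
      exact hz.1
    have hclosed : IsClosed[T] (C \ {x}) := by
      have : C \ {x} = (Cᶜ ∪ {x})ᶜ := by rw [compl_union, compl_compl, diff_eq]
      rw [this]
      exact @isClosed_compl_iff ℝ T (Cᶜ ∪ {x}) |>.mpr ((hT _).mpr hVopen)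
    have hsub : C ⊆ C \ {x} := by
      refine @closure_minimal ℝ T A (C \ {x}) ?_ hclosed
      intro y hy
      exact ⟨(@subset_closure ℝ T A : A ⊆ C) hy, by rintro rfl; exact hxA hy⟩
    exact (hsub hxC).2 rfl
  have hAmeas : MeasurableSet A := hAC ▸ hCmeas
  have hAnull : volume A = 0 := hAC ▸ hCnull
  refine ⟨hAC ▸ hCclosed, fun x hx => ?_⟩
  refine ⟨Aᶜ ∪ {x}, ⟨hAmeas.compl.union (measurableSet_singleton' x), fun y _ => ?_⟩, ?_⟩
  · refine isDensityPoint_of_compl_null ?_ y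
    refine measure_mono_null (fun z hz => ?_) hAnull
    simp only [compl_union, mem_inter_iff, mem_compl_iff, not_not] at hz
    exact hz.1
  · ext y
    simp only [mem_inter_iff, mem_union, mem_compl_iff, mem_singleton_iff]
    constructor
    · rintro ⟨hy1 | rfl, hy2⟩
      · exact absurd hy2 hy1
      · rfl
    · rintro rfl
      exact ⟨Or.inr rfl, hx⟩
end

section
/- If a subspace A of the density topology on ℝ has the property that every nowhere dense subset of A is countable, then A is σ-orthocompact: every open cover of A has an open refinement which is a countable union of interior-preserving families. -/
open MeasureTheory Set Filter Topology

/-- If every nowhere dense subset of the subspace A of the density topology is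
countable, then A is σ-orthocompact. -/
theorem density_sigma_orthocompact (T : TopologicalSpace ℝ)
    (hT : ∀ s : Set ℝ, IsOpen[T] s ↔ DensityOpen s) (A : Set ℝ)
    (hN : ∀ N : Set A, @IsNowhereDense A (TopologicalSpace.induced Subtype.val T) N →
      N.Countable) :
    ∀ 𝒰 : Set (Set A),
      (∀ u ∈ 𝒰, IsOpen[TopologicalSpace.induced Subtype.val T] u) → ⋃₀ 𝒰 = Set.univ →
      ∃ R : ℕ → Set (Set A),
        (∀ n, ∀ r ∈ R n, IsOpen[TopologicalSpace.induced Subtype.val T] r) ∧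
        (∀ n, ∀ r ∈ R n, ∃ u ∈ 𝒰, r ⊆ u) ∧
        ⋃₀ (⋃ n, R n) = Set.univ ∧
        (∀ n, ∀ W ⊆ R n, IsOpen[TopologicalSpace.induced Subtype.val T] (⋂₀ W)) := by
  intro 𝒰 hopen hcover
  letI t : TopologicalSpace A := TopologicalSpace.induced Subtype.val T
  -- the collection of pairwise disjoint families of nonempty open sets refining 𝒰
  set S : Set (Set (Set A)) :=
    {𝒱 | (∀ v ∈ 𝒱, IsOpen v ∧ v.Nonempty ∧ ∃ u ∈ 𝒰, v ⊆ u) ∧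
      𝒱.Pairwise (Disjoint : Set A → Set A → Prop)} with hSdef
  obtain ⟨𝒱, h𝒱⟩ : ∃ m, Maximal (· ∈ S) m := by
    apply zorn_subset
    intro c hcS hchain
    refine ⟨⋃₀ c, ⟨?_, ?_⟩, fun s hs => subset_sUnion_of_mem hs⟩
    · rintro v ⟨w, hw, hv⟩
      exact (hcS hw).1 v hv
    · intro a ha b hb hab
      obtain ⟨wa, hwa, hav⟩ := ha
      obtain ⟨wb, hwb, hbv⟩ := hb
      rcases hchain.total hwa hwb with h | h
      · exact (hcS hwb).2 (h hav) hbv hab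
      · exact (hcS hwa).2 hav (h hbv) hab
  obtain ⟨⟨hVprop, hVdisj⟩, hVmax⟩ := h𝒱
  have hVopen : ∀ v ∈ 𝒱, IsOpen v := fun v hv => (hVprop v hv).1
  have hUopen : IsOpen (⋃₀ 𝒱) := isOpen_sUnion hVopen
  -- the remainder is closed with empty interior, hence nowhere dense, hence countable
  set N : Set A := (⋃₀ 𝒱)ᶜ with hNdef
  have hNint : interior N = ∅ := by
    by_contra h
    obtain ⟨x, hx⟩ := nonempty_iff_ne_empty.2 h
    have hxU : (x : A) ∈ ⋃₀ 𝒰 := hcover ▸ mem_univ x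
    obtain ⟨u, hu𝒰, hxu⟩ := hxU
    set V : Set A := interior N ∩ u with hVdef
    have hVne : V.Nonempty := ⟨x, hx, hxu⟩
    have hVop : IsOpen V := isOpen_interior.inter (hopen u hu𝒰)
    have hVdisjall : ∀ v ∈ 𝒱, Disjoint V v := by
      intro v hv
      refine disjoint_left.2 fun y hyV hyv => ?_
      have : y ∈ N := interior_subset hyV.1
      exact this (⟨v, hv, hyv⟩ : y ∈ ⋃₀ 𝒱)
    have hmem : insert V 𝒱 ∈ S := by
      constructor
      · rintro v (rfl | hv)
        · exact ⟨hVop, hVne, u, hu𝒰, inter_subset_right⟩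
        · exact hVprop v hv
      · refine hVdisj.insert fun v hv _ => ⟨hVdisjall v hv, (hVdisjall v hv).symm⟩
    have : V ∈ 𝒱 := hVmax hmem (subset_insert _ _) (mem_insert _ _)
    obtain ⟨y, hy⟩ := hVne
    exact (interior_subset hy.1 : y ∈ N) ⟨V, this, hy⟩
  have hNnd : @IsNowhereDense A t N := by
    have hcl : closure N = N := (hUopen.isClosed_compl).closure_eq
    rw [IsNowhereDense, hcl, hNint]
  have hNcount : N.Countable := hN N hNnd
  -- choose for each point of A a member of 𝒰 containing it
  have hchoose : ∀ x : A, ∃ u ∈ 𝒰, x ∈ u := by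
    intro x
    have : (x : A) ∈ ⋃₀ 𝒰 := hcover ▸ mem_univ x
    obtain ⟨u, hu, hxu⟩ := this
    exact ⟨u, hu, hxu⟩
  choose g hg𝒰 hgmem using hchoose
  -- key lemma: subfamilies of a pairwise disjoint family have open intersections
  have key : ∀ W ⊆ 𝒱, IsOpen (⋂₀ W) := by
    intro W hW
    rcases W.eq_empty_or_nonempty with rfl | ⟨a, ha⟩
    · simp
    by_cases hWa : W ⊆ {a}
    · have : W = {a} := subset_antisymm hWa (singleton_subset_iff.2 ha)
      rw [this, sInter_singleton]; exact hVopen a (hW ha)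
    · obtain ⟨b, hb, hba⟩ := not_subset.1 hWa
      have : ⋂₀ W = ∅ := by
        refine eq_empty_of_forall_notMem fun y hy => ?_
        exact (hVdisj (hW hb) (hW ha) hba).ne_of_mem (hy b hb) (hy a ha) rfl
      rw [this]; exact isOpen_empty
  -- handle the singleton-only families: a family of the form {s}
  have keysingle : ∀ s : Set A, IsOpen s → ∀ W ⊆ ({s} : Set (Set A)), IsOpen (⋂₀ W) := by
    intro s hs W hW
    rcases W.eq_empty_or_nonempty with rfl | ⟨a, ha⟩
    · simp
    · have : W = {s} := subset_antisymm hW (by rintro x rfl; exact hW ha ▸ ha)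
      rw [this, sInter_singleton]; exact hs
  rcases N.eq_empty_or_nonempty with hNe | hNne
  · -- remainder empty: 𝒱 alone covers
    refine ⟨fun n => Nat.rec 𝒱 (fun _ _ => ∅) n, ?_, ?_, ?_, ?_⟩
    · rintro (_ | n) r hr
      · exact hVopen r hr
      · exact absurd hr (notMem_empty r)
    · rintro (_ | n) r hr
      · exact (hVprop r hr).2.2
      · exact absurd hr (notMem_empty r)
    · apply eq_univ_of_forall
      intro x
      have : (x : A) ∈ ⋃₀ 𝒱 := by
        by_contra hx
        exact (hNe ▸ hx : x ∈ (∅ : Set A))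
      obtain ⟨v, hv, hxv⟩ := this
      exact ⟨v, mem_iUnion.2 ⟨0, hv⟩, hxv⟩
    · rintro (_ | n) W hW
      · exact key W hW
      · have : W = ∅ := subset_empty_iff.1 hW
        rw [this]; simp
  · -- remainder nonempty: enumerate it
    obtain ⟨f, hf⟩ := hNcount.exists_eq_range hNne
    refine ⟨fun n => Nat.rec 𝒱 (fun k _ => {g (f k)}) n, ?_, ?_, ?_, ?_⟩
    · rintro (_ | n) r hr
      · exact hVopen r hr
      · rcases hr with rfl; exact hopen _ (hg𝒰 _)
    · rintro (_ | n) r hr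
      · exact (hVprop r hr).2.2
      · rcases hr with rfl; exact ⟨g (f n), hg𝒰 _, subset_rfl⟩
    · apply eq_univ_of_forall
      intro x
      by_cases hx : (x : A) ∈ ⋃₀ 𝒱
      · obtain ⟨v, hv, hxv⟩ := hx
        exact ⟨v, mem_iUnion.2 ⟨0, hv⟩, hxv⟩
      · have : x ∈ N := hx
        rw [hf] at this
        obtain ⟨k, hk⟩ := this
        exact ⟨g (f k), mem_iUnion.2 ⟨k + 1, rfl⟩, hk ▸ hgmem (f k)⟩
    · rintro (_ | n) W hW
      · exact key W hW
      · exact keysingle _ (hopen _ (hg𝒰 _)) W hW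
end
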